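/- arXiv:1611.04638 — 4 statements merged into one kernel-verified Lean document; each statement's English description precedes it below -/
import Mathlib

section
/- (Lemma 1, selection of γ^s and γ^w.) Let σ > 0 and ε ∈ (0, 1/2), and fix γ with ε < γ < 1 − ε. Let (λ_n)_{n≥1} be positive reals with √n·λ_n → 0 and n·λ_n → ∞ as n → ∞. Suppose that for every sufficiently large n there is ν_n > 0 satisfying Φ(√n(ν_n − √λ_n)/σ) + Φ(√n(−ν_n − √λ_n)/σ) = γ. Then ν_n/√λ_n → 1 as n → ∞. -/
/-!
With `ν_n > 0` the second argument is at most `-√(n λ_n)/σ → -∞`, so its `Φ`-term vanishes and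
`Φ(t_n) → γ ∈ (0, 1)` for `t_n = √n (ν_n - √λ_n)/σ`. A monotone function with limits `0` and `1`
can only take values near an interior level on a bounded set, so `t_n` stays bounded, and
`ν_n/√λ_n - 1 = σ t_n/√(n λ_n) → 0` because `n λ_n → ∞`.
-/

open MeasureTheory ProbabilityTheory Filter

/-- The standard normal cumulative distribution function. -/
noncomputable def Phi (x : ℝ) : ℝ := (gaussianReal 0 1 (Set.Iic x)).toReal

open Topology

theorem Monotone.isBoundedUnder_abs_of_tendsto_comp {α : Type*} {f : ℝ → ℝ} {a b c : ℝ}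
    {l : Filter α} {u : α → ℝ} (hf : Monotone f) (hbot : Tendsto f atBot (𝓝 a))
    (htop : Tendsto f atTop (𝓝 b)) (hac : a < c) (hcb : c < b) (hu : Tendsto (f ∘ u) l (𝓝 c)) :
    IsBoundedUnder (· ≤ ·) l (fun x => |u x|) := by
  obtain ⟨A, hA⟩ := (hbot.eventually_lt_const hac).exists
  obtain ⟨B, hB⟩ := (htop.eventually_const_lt hcb).exists
  refine isBoundedUnder_le_abs.2 ⟨isBoundedUnder_of_eventually_le (a := B) ?_,
    isBoundedUnder_of_eventually_ge (a := A) ?_⟩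
  · filter_upwards [hu.eventually_lt_const hB] with x hx
    exact (hf.reflect_lt hx).le
  · filter_upwards [hu.eventually_const_lt hA] with x hx
    exact (hf.reflect_lt hx).le

lemma Phi_eq_cdf : Phi = cdf (gaussianReal 0 1) := by
  ext x
  rw [Phi, cdf_eq_real, measureReal_def]

lemma monotone_Phi : Monotone Phi := Phi_eq_cdf ▸ (cdf _).mono

lemma tendsto_Phi_atBot : Tendsto Phi atBot (𝓝 0) := Phi_eq_cdf ▸ tendsto_cdf_atBot _

lemma tendsto_Phi_atTop : Tendsto Phi atTop (𝓝 1) := Phi_eq_cdf ▸ tendsto_cdf_atTop _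

lemma div_sqrt_eq_one_add_standardized {x l ν σ : ℝ} (hx : 0 < x) (hl : 0 < l) (hσ : σ ≠ 0) :
    ν / √l = 1 + σ * ((√x * √l)⁻¹ * (√x * (ν - √l) / σ)) := by
  have : √x ≠ 0 := (Real.sqrt_pos.2 hx).ne'
  have : √l ≠ 0 := (Real.sqrt_pos.2 hl).ne'
  field_simp
  ring

theorem weak_signal_scale_general (σ ε γ : ℝ) (hσ : 0 < σ) (hε : 0 < ε)
    (hγ1 : ε < γ) (hγ2 : γ < 1 - ε)
    (lam : ℕ → ℝ) (hlam : ∀ n, 0 < lam n)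
    (h2 : Tendsto (fun n : ℕ => (n : ℝ) * lam n) atTop atTop)
    (ν : ℕ → ℝ)
    (hν : ∀ᶠ n : ℕ in atTop, 0 < ν n ∧
      Phi (Real.sqrt n * (ν n - Real.sqrt (lam n)) / σ) +
        Phi (Real.sqrt n * (-(ν n) - Real.sqrt (lam n)) / σ) = γ) :
    Tendsto (fun n : ℕ => ν n / Real.sqrt (lam n)) atTop (nhds 1) := by
  set a : ℕ → ℝ := fun n => √n * √(lam n)
  set t : ℕ → ℝ := fun n => √n * (ν n - √(lam n)) / σ
  have ha : Tendsto a atTop atTop := by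
    simpa only [a, Function.comp_def, ← Real.sqrt_mul (Nat.cast_nonneg _)] using
      Real.tendsto_sqrt_atTop.comp h2
  have hs : Tendsto (fun n : ℕ => √n * (-(ν n) - √(lam n)) / σ) atTop atBot := by
    refine tendsto_atBot_mono' _ ?_ ((tendsto_neg_atTop_atBot.comp ha).atBot_div_const hσ)
    filter_upwards [hν] with n hn
    have : √n * (-(ν n) - √(lam n)) ≤ -a n := by nlinarith [hn.1, Real.sqrt_nonneg n]
    exact div_le_div_of_nonneg_right this hσ.le
  have ht : Tendsto (Phi ∘ t) atTop (𝓝 γ) := by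
    refine (sub_zero γ ▸ tendsto_const_nhds.sub (tendsto_Phi_atBot.comp hs)).congr' ?_
    filter_upwards [hν] with n hn
    simp only [Function.comp_apply, t]
    linarith [hn.2]
  have ht_bdd := monotone_Phi.isBoundedUnder_abs_of_tendsto_comp tendsto_Phi_atBot
    tendsto_Phi_atTop (by linarith) (by linarith) ht
  have hlim : Tendsto (fun n => 1 + σ * ((a n)⁻¹ * t n)) atTop (𝓝 (1 + σ * 0)) :=
    (((tendsto_inv_atTop_zero.comp ha).zero_mul_isBoundedUnder_le ht_bdd).const_mul σ).const_add 1
  rw [mul_zero, add_zero] at hlim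
  refine hlim.congr' ?_
  filter_upwards [eventually_gt_atTop 0] with n hn
  exact (div_sqrt_eq_one_add_standardized (Nat.cast_pos.2 hn) (hlam n) hσ.ne').symm

/-- Lemma 1: if √n·λ_n → 0 and n·λ_n → ∞, and ν_n > 0 eventually solves
Φ(√n(ν_n − √λ_n)/σ) + Φ(√n(−ν_n − √λ_n)/σ) = γ with ε < γ < 1 − ε, then
ν_n/√λ_n → 1. -/
theorem weak_signal_scale (σ ε γ : ℝ) (hσ : 0 < σ) (hε : 0 < ε) (hε' : ε < 1/2)
    (hγ1 : ε < γ) (hγ2 : γ < 1 - ε)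
    (lam : ℕ → ℝ) (hlam : ∀ n, 0 < lam n)
    (h1 : Tendsto (fun n : ℕ => Real.sqrt n * lam n) atTop (nhds 0))
    (h2 : Tendsto (fun n : ℕ => (n : ℝ) * lam n) atTop atTop)
    (ν : ℕ → ℝ)
    (hν : ∀ᶠ n : ℕ in atTop, 0 < ν n ∧
      Phi (Real.sqrt n * (ν n - Real.sqrt (lam n)) / σ) +
        Phi (Real.sqrt n * (-(ν n) - Real.sqrt (lam n)) / σ) = γ) :
    Tendsto (fun n : ℕ => ν n / Real.sqrt (lam n)) atTop (nhds 1) :=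
  weak_signal_scale_general σ ε γ hσ hε hγ1 hγ2 lam hlam h2 ν hν
end

section
/- Fix an integer n ≥ 1, σ > 0, λ > 0 and θ ∈ ℝ, and let W be a random variable with law N(θ, σ²/n). Then E[ Φ(√n(W − √λ)/σ) + Φ(√n(−W − √λ)/σ) ] = Φ(√n(θ − √λ)/(√2·σ)) + Φ(−√n(θ + √λ)/(√2·σ)). That is, the expectation of the plug-in detection probability estimate P̂_d = Φ((W − √λ)/(σ/√n)) + Φ((−W − √λ)/(σ/√n)) equals Φ((θ − √λ)·√n/(√2σ)) + Φ(−(θ + √λ)·√n/(√2σ)). -/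
/-!
If `Z ~ N(0, 1)` is independent of `X ~ N(m, v)`, then `E Φ(X) = P(Z ≤ X) = P(Z - X ≤ 0)`, and
`Z - X ~ N(-m, 1 + v)`, so `E Φ(X) = Φ(m / √(1 + v))`. Both summands are `Φ` of an affine image
of `W` with variance `1`, whence the `√2`.
-/

open MeasureTheory ProbabilityTheory

open Real Set NNReal

lemma monotone_measure_Iic (ν : Measure ℝ) : Monotone fun x ↦ ν (Iic x) :=
  fun _ _ hab ↦ measure_mono (Iic_subset_Iic.mpr hab)

lemma measurable_Phi : Measurable Phi :=
  ((monotone_measure_Iic _).measurable).ennreal_toReal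

lemma abs_Phi_le_one (x : ℝ) : |Phi x| ≤ 1 := by
  unfold Phi
  rw [abs_of_nonneg ENNReal.toReal_nonneg]
  exact measureReal_le_one

lemma integrable_Phi_comp {α : Type*} [MeasurableSpace α] (μ : Measure α) [IsFiniteMeasure μ]
    {f : α → ℝ} (hf : Measurable f) : Integrable (fun x ↦ Phi (f x)) μ :=
  .of_bound (measurable_Phi.comp hf).aestronglyMeasurable 1 (ae_of_all _ fun _ ↦ abs_Phi_le_one _)

lemma lintegral_measure_Iic_eq_conv (μ ν : Measure ℝ) [SFinite ν] :
    ∫⁻ x, ν (Iic x) ∂μ = (μ.map (fun x ↦ -x) ∗ ν) (Iic 0) := by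
  have hs : MeasurableSet ((fun p : ℝ × ℝ ↦ p.1 + p.2) ⁻¹' Iic 0) :=
    measurable_add measurableSet_Iic
  rw [Measure.conv, Measure.map_apply measurable_add measurableSet_Iic, Measure.prod_apply hs,
    lintegral_map (measurable_measure_prodMk_left hs) measurable_neg]
  congr 1 with x
  congr 1 with y
  simp

lemma gaussianReal_eq_map_affine (m : ℝ) (v : ℝ≥0) :
    gaussianReal m v = (gaussianReal 0 1).map (fun z ↦ √v * z + m) := by
  have hmul := gaussianReal_map_const_mul (μ := 0) (v := 1) √(v : ℝ)
  rw [← Function.comp_def (· + m), ← Measure.map_map (by fun_prop) (by fun_prop), hmul,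
    gaussianReal_map_add_const]
  congr 1
  · simp
  · ext; simp

lemma measure_Iic_gaussianReal (m : ℝ) {v : ℝ≥0} (hv : v ≠ 0) (c : ℝ) :
    (gaussianReal m v (Iic c)).toReal = Phi ((c - m) / √v) := by
  have hv' : 0 < √(v : ℝ) := by positivity
  rw [gaussianReal_eq_map_affine, Measure.map_apply (by fun_prop) measurableSet_Iic, Phi]
  congr 2 with z
  simp [le_div_iff₀ hv', mul_comm, le_sub_iff_add_le]

lemma integral_Phi_gaussianReal (m : ℝ) (v : ℝ≥0) :
    ∫ x, Phi x ∂gaussianReal m v = Phi (m / √(1 + v)) := by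
  change ∫ x, (gaussianReal 0 1 (Iic x)).toReal ∂_ = _
  rw [integral_toReal ((monotone_measure_Iic _).measurable.aemeasurable)
      (ae_of_all _ fun _ ↦ measure_lt_top _ _),
    lintegral_measure_Iic_eq_conv, gaussianReal_map_neg, gaussianReal_conv_gaussianReal,
    measure_Iic_gaussianReal _ (by positivity)]
  simp [add_comm]

lemma integral_Phi_affine_gaussianReal (a b m : ℝ) (v : ℝ≥0) :
    ∫ x, Phi (a * x + b) ∂gaussianReal m v = Phi ((a * m + b) / √(1 + a ^ 2 * v)) := by
  have hmap : (gaussianReal m v).map (fun x ↦ a * x + b)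
      = gaussianReal (a * m + b) (.mk (a ^ 2) (sq_nonneg _) * v) := by
    rw [← Function.comp_def (· + b), ← Measure.map_map (by fun_prop) (by fun_prop),
      gaussianReal_map_const_mul, gaussianReal_map_add_const]
  rw [← integral_map (by fun_prop) measurable_Phi.aestronglyMeasurable, hmap,
    integral_Phi_gaussianReal]
  simp

theorem expectation_plugin_detection_general (n : ℕ) (hn : 1 ≤ n) (σ lam θ : ℝ)
    (hσ : 0 < σ) :
    ∫ x, (Phi (Real.sqrt n * (x - Real.sqrt lam) / σ) +
          Phi (Real.sqrt n * (-x - Real.sqrt lam) / σ))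
        ∂(gaussianReal θ (Real.toNNReal (σ^2 / n)))
      = Phi (Real.sqrt n * (θ - Real.sqrt lam) / (Real.sqrt 2 * σ)) +
        Phi (-(Real.sqrt n * (θ + Real.sqrt lam)) / (Real.sqrt 2 * σ)) := by
  have hn' : (0 : ℝ) < n := by exact_mod_cast hn
  have hvar (a : ℝ) (ha : a ^ 2 = n / σ ^ 2) : √(1 + a ^ 2 * (σ ^ 2 / n).toNNReal) = √2 := by
    rw [Real.coe_toNNReal _ (by positivity), ha]
    field_simp
    norm_num
  have h₁ (x : ℝ) : √n * (x - √lam) / σ = √n / σ * x + -(√n * √lam / σ) := by ring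
  have h₂ (x : ℝ) : √n * (-x - √lam) / σ = -(√n / σ) * x + -(√n * √lam / σ) := by ring
  simp_rw [h₂, h₁]
  rw [integral_add (integrable_Phi_comp _ (by fun_prop)) (integrable_Phi_comp _ (by fun_prop)),
    integral_Phi_affine_gaussianReal, integral_Phi_affine_gaussianReal,
    hvar _ (by rw [div_pow, sq_sqrt hn'.le]), hvar _ (by rw [neg_sq, div_pow, sq_sqrt hn'.le])]
  congr 2 <;> ring

/-- the expectation under W ~ N(θ, σ²/n) of the plug-in detection
probability estimate Φ(√n(W − √λ)/σ) + Φ(√n(−W − √λ)/σ) equals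
Φ(√n(θ − √λ)/(√2σ)) + Φ(−√n(θ + √λ)/(√2σ)). -/
theorem expectation_plugin_detection (n : ℕ) (hn : 1 ≤ n) (σ lam θ : ℝ)
    (hσ : 0 < σ) (hlam : 0 < lam) :
    ∫ x, (Phi (Real.sqrt n * (x - Real.sqrt lam) / σ) +
          Phi (Real.sqrt n * (-x - Real.sqrt lam) / σ))
        ∂(gaussianReal θ (Real.toNNReal (σ^2 / n)))
      = Phi (Real.sqrt n * (θ - Real.sqrt lam) / (Real.sqrt 2 * σ)) +
        Phi (-(Real.sqrt n * (θ + Real.sqrt lam)) / (Real.sqrt 2 * σ)) :=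
  expectation_plugin_detection_general n hn σ lam θ hσ
end

section
/- (Lemma comparing θ with the boundary points c_2 and c_4.) Fix an integer n ≥ 1, σ > 0, α, τ ∈ (0,1) with τ ≥ α and τ < 2Φ(−z_{α/2}/2) − α, and λ > 0 with √λ > z_{α/2}σ/√n. Let c_2 be a solution of θ = √λ + z_{α/2}σ̃(θ)/√n and c_4 a solution of θ = √λ + z_{α/2}σ/√n + z_{α/2}σ̃(θ)/√n. Then for every θ ∈ (√λ + (1/2)z_{α/2}σ/√n, √λ + 2z_{α/2}σ/√n): θ > c_2 if and only if θ > √λ + z_{α/2}σ̃(θ)/√n; and θ > c_4 if and only if θ > √λ + z_{α/2}σ/√n + z_{α/2}σ̃(θ)/√n. -/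
/-! With `A = z σ / √n` one has `z σ̃(θ) / √n = A θ² / (θ² + λ)`. On `[√λ, ∞)` the function
`θ² / (θ² + λ)` has slope below `1 / (2√λ)`, so for `A ≤ 2√λ` the map `g θ = θ - A θ² / (θ² + λ)`
is strictly increasing there. The points `c₂`, `c₄` and every `θ` of the interval lie in
`[√λ, ∞)`, and `c₂`, `c₄` are where `g` takes the values `√λ` and `√λ + A`; so comparing `θ`
with them is comparing `g θ` with those values. -/

open MeasureTheory ProbabilityTheory

/-- P_s(θ,ν) = Φ(√n(θ − ν)/σ) + Φ(√n(−θ − ν)/σ). -/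
noncomputable def Ps (n : ℕ) (σ θ ν : ℝ) : ℝ :=
  Phi (Real.sqrt n * (θ - ν) / σ) + Phi (Real.sqrt n * (-θ - ν) / σ)

/-- σ̃(θ) = (1 + λ/θ²)⁻¹ σ for θ ≠ 0, with the convention σ̃(0) = 0. -/
noncomputable def sigTilde (lam σ θ : ℝ) : ℝ :=
  if θ = 0 then 0 else (1 + lam / θ ^ 2)⁻¹ * σ

open Classical in
/-- The piecewise function CR_a(θ,ν); here `za` denotes the quantile z_{α/2}. -/
noncomputable def CRa (n : ℕ) (σ lam za θ ν : ℝ) : ℝ :=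
  if θ < |ν - za * sigTilde lam σ θ / Real.sqrt n| then
    (Ps n σ θ ν - 2 * Phi (-(za * sigTilde lam σ θ / σ))) *
      (if ν < za * sigTilde lam σ θ / Real.sqrt n then 1 else 0)
  else if θ ≤ ν + za * sigTilde lam σ θ / Real.sqrt n then
    Phi (za * sigTilde lam σ θ / σ) - Phi (Real.sqrt n * (ν - θ) / σ)
  else 1 - 2 * Phi (-(za * sigTilde lam σ θ / σ))

open Classical in
/-- The piecewise function CR_b(θ,ν); here `za` denotes the quantile z_{α/2}. -/
noncomputable def CRb (n : ℕ) (σ α za θ ν : ℝ) : ℝ :=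
  if θ < |ν - za * σ / Real.sqrt n| then
    (Ps n σ θ ν - α) * (if ν < za * σ / Real.sqrt n then 1 else 0)
  else if θ ≤ ν + za * σ / Real.sqrt n then
    1 - α / 2 - Phi (Real.sqrt n * (ν - θ) / σ)
  else 1 - α

open Set

lemma sigTilde_eq_mul (lam σ θ : ℝ) : sigTilde lam σ θ = θ ^ 2 / (θ ^ 2 + lam) * σ := by
  unfold sigTilde
  split_ifs with hθ
  · simp [hθ]
  · rw [one_add_div (pow_ne_zero 2 hθ), inv_div, add_comm]

lemma sq_div_sq_add_sq_sub_sq_div_sq_add_sq {L x y : ℝ} (hx : x ^ 2 + L ^ 2 ≠ 0)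
    (hy : y ^ 2 + L ^ 2 ≠ 0) :
    y ^ 2 / (y ^ 2 + L ^ 2) - x ^ 2 / (x ^ 2 + L ^ 2)
      = L ^ 2 * ((y - x) * (y + x)) / ((y ^ 2 + L ^ 2) * (x ^ 2 + L ^ 2)) := by
  rw [div_sub_div _ _ hy hx]
  ring

lemma two_mul_pow_three_mul_add_lt {L x y : ℝ} (hL : 0 < L) (hx : L ≤ x) (hxy : x < y) :
    2 * L ^ 3 * (x + y) < (y ^ 2 + L ^ 2) * (x ^ 2 + L ^ 2) := by
  have hx0 : 0 < x := hL.trans_le hx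
  have hy0 : 0 < y := hx0.trans hxy
  have hmid : L * (x + y) < 2 * (x * y) := by
    nlinarith [mul_pos hx0 (sub_pos.2 (hx.trans_lt hxy)), mul_nonneg hy0.le (sub_nonneg.2 hx)]
  calc 2 * L ^ 3 * (x + y) = 2 * L ^ 2 * (L * (x + y)) := by ring
    _ < 2 * L ^ 2 * (2 * (x * y)) := by gcongr
    _ = (2 * L * y) * (2 * L * x) := by ring
    _ ≤ (y ^ 2 + L ^ 2) * (x ^ 2 + L ^ 2) := by
      gcongr <;> nlinarith [sq_nonneg (x - L), sq_nonneg (y - L)]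

theorem strictMonoOn_sub_mul_sq_div_sq_add {lam a : ℝ} (hlam : 0 < lam) (ha : a ≤ 2 * √lam) :
    StrictMonoOn (fun θ => θ - a * (θ ^ 2 / (θ ^ 2 + lam))) (Ici √lam) := by
  obtain ⟨L, hL, rfl⟩ : ∃ L, 0 < L ∧ L ^ 2 = lam :=
    ⟨√lam, Real.sqrt_pos.2 hlam, Real.sq_sqrt hlam.le⟩
  rw [Real.sqrt_sq hL.le] at ha ⊢
  intro x (hx : L ≤ x) y _ hxy
  have hx0 : 0 < x := hL.trans_le hx
  have hP : 0 < (y ^ 2 + L ^ 2) * (x ^ 2 + L ^ 2) := by positivity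
  have hD := sq_div_sq_add_sq_sub_sq_div_sq_add_sq (L := L) (x := x) (y := y)
    (by positivity) (by positivity)
  have hD0 : 0 ≤ y ^ 2 / (y ^ 2 + L ^ 2) - x ^ 2 / (x ^ 2 + L ^ 2) := by
    rw [hD]
    exact div_nonneg (mul_nonneg (sq_nonneg L) (mul_nonneg (by linarith) (by linarith))) hP.le
  have hDlt : 2 * L * (y ^ 2 / (y ^ 2 + L ^ 2) - x ^ 2 / (x ^ 2 + L ^ 2)) < y - x := by
    rw [hD, ← mul_div_assoc, div_lt_iff₀ hP]
    nlinarith [two_mul_pow_three_mul_add_lt hL hx hxy, mul_pos (sub_pos.2 hxy) hL]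
  nlinarith [mul_le_mul_of_nonneg_right ha hD0]

theorem compare_with_boundary_points_general (n : ℕ) (σ lam za : ℝ)
    (hlam : 0 < lam)
    (hlamLB : za * σ / Real.sqrt n < Real.sqrt lam)
    (c₂ c₄ : ℝ)
    (hc₂ : c₂ = Real.sqrt lam + za * sigTilde lam σ c₂ / Real.sqrt n)
    (hc₄ : c₄ = Real.sqrt lam + za * σ / Real.sqrt n
        + za * sigTilde lam σ c₄ / Real.sqrt n) :
    ∀ θ ∈ Set.Ioo (Real.sqrt lam + (1/2) * za * σ / Real.sqrt n)
        (Real.sqrt lam + 2 * za * σ / Real.sqrt n),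
      (c₂ < θ ↔ Real.sqrt lam + za * sigTilde lam σ θ / Real.sqrt n < θ) ∧
      (c₄ < θ ↔ Real.sqrt lam + za * σ / Real.sqrt n
          + za * sigTilde lam σ θ / Real.sqrt n < θ) := by
  rintro θ ⟨hθlo, hθhi⟩
  rw [show (1 / 2) * za * σ / √n = za * σ / √n / 2 by ring] at hθlo
  rw [show 2 * za * σ / √n = 2 * (za * σ / √n) by ring] at hθhi
  set A := za * σ / √n
  have hA : 0 < A := by linarith
  have hcorr : ∀ x, za * sigTilde lam σ x / √n = A * (x ^ 2 / (x ^ 2 + lam)) := fun x => by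
    rw [sigTilde_eq_mul]; ring
  have hmono := strictMonoOn_sub_mul_sq_div_sq_add hlam (a := A) (by linarith)
  have hcorr_nonneg : ∀ x, 0 ≤ A * (x ^ 2 / (x ^ 2 + lam)) := fun x => by positivity
  rw [hcorr] at hc₂ hc₄ ⊢
  have hθ : θ ∈ Ici √lam := by simp only [mem_Ici]; linarith
  have hc₂L : c₂ ∈ Ici √lam := by simp only [mem_Ici]; linarith [hcorr_nonneg c₂]
  have hc₄L : c₄ ∈ Ici √lam := by simp only [mem_Ici]; linarith [hcorr_nonneg c₄]
  rw [← hmono.lt_iff_lt hc₂L hθ, ← hmono.lt_iff_lt hc₄L hθ]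
  constructor <;> constructor <;> intro h <;> linarith

/-- Lemma comparing θ with c₂ and c₄: for every
θ ∈ (√λ + (1/2)z_{α/2}σ/√n, √λ + 2z_{α/2}σ/√n), θ > c₂ iff
θ > √λ + z_{α/2}σ̃(θ)/√n, and θ > c₄ iff θ > √λ + z_{α/2}σ/√n + z_{α/2}σ̃(θ)/√n. -/
theorem compare_with_boundary_points (n : ℕ) (hn : 1 ≤ n) (σ lam α τ za zt : ℝ)
    (hσ : 0 < σ) (hlam : 0 < lam)
    (hα : α ∈ Set.Ioo (0:ℝ) 1) (hτ : τ ∈ Set.Ioo (0:ℝ) 1)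
    (hza : Phi (-za) = α / 2) (hzt : Phi (-zt) = τ / 2)
    (hC1 : α ≤ τ) (hC2 : τ < 2 * Phi (-(za / 2)) - α)
    (hlamLB : za * σ / Real.sqrt n < Real.sqrt lam)
    (c₂ c₄ : ℝ) (hc₂pos : 0 < c₂) (hc₄pos : 0 < c₄)
    (hc₂ : c₂ = Real.sqrt lam + za * sigTilde lam σ c₂ / Real.sqrt n)
    (hc₄ : c₄ = Real.sqrt lam + za * σ / Real.sqrt n
        + za * sigTilde lam σ c₄ / Real.sqrt n) :
    ∀ θ ∈ Set.Ioo (Real.sqrt lam + (1/2) * za * σ / Real.sqrt n)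
        (Real.sqrt lam + 2 * za * σ / Real.sqrt n),
      (c₂ < θ ↔ Real.sqrt lam + za * sigTilde lam σ θ / Real.sqrt n < θ) ∧
      (c₄ < θ ↔ Real.sqrt lam + za * σ / Real.sqrt n
          + za * sigTilde lam σ θ / Real.sqrt n < θ) :=
  compare_with_boundary_points_general n σ lam za hlam hlamLB c₂ c₄ hc₂ hc₄
end

section
/- (Monotonicity of CR_1.) Fix an integer n ≥ 1, σ > 0, α, τ ∈ (0,1) with τ ≥ α and τ < 2Φ(−z_{α/2}/2) − α, and λ > 0 with √λ > z_{α/2}σ/√n. Let c_1, c_2 > 0 be solutions of θ = √λ − z_{α/2}σ̃(θ)/√n and θ = √λ + z_{α/2}σ̃(θ)/√n, respectively. Then CR_1(θ) = CR_a(θ, √λ)/P_s(θ, √λ) is, as a function of θ > 0, non-decreasing on (0, c_1] and strictly increasing on [c_1, c_2]. -/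
open MeasureTheory ProbabilityTheory

/-! With `w θ = z_{α/2} σ̃(θ)/√n`, both `w` and `θ ↦ θ - w θ` increase on `θ > 0`, the latter
because `z_{α/2} σ/√n < √λ`. Hence `θ + w θ < √λ` below `c₁`, where `CR_a` vanishes, and all of `[c₁, c₂]`
lies in the middle branch of `CR_a`, where `CR_a = P_s - T` with the tail mass
`T θ = Φ(-z_{α/2} σ̃(θ)/σ) + Φ(-√n(θ + √λ)/σ)` decreasing. Since the Gaussian density is smaller at
`√n(θ + √λ)/σ` than at `√n(θ - √λ)/σ`, `P_s` strictly increases, so `CR_1 = 1 - T/P_s` does too. -/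

open Set

lemma Phi_eq_integral (x : ℝ) : Phi x = ∫ t in Iic x, gaussianPDFReal 0 1 t := by
  rw [Phi, gaussianReal_apply_eq_integral 0 one_ne_zero, ENNReal.toReal_ofReal]
  exact setIntegral_nonneg measurableSet_Iic fun t _ => (gaussianPDFReal_pos 0 1 t one_ne_zero).le

lemma Phi_sub_Phi (a b : ℝ) : Phi b - Phi a = ∫ t in a..b, gaussianPDFReal 0 1 t := by
  rw [Phi_eq_integral, Phi_eq_integral]
  exact intervalIntegral.integral_Iic_sub_Iic (integrable_gaussianPDFReal 0 1).integrableOn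
    (integrable_gaussianPDFReal 0 1).integrableOn

lemma Phi_strictMono : StrictMono Phi := by
  intro a b hab
  have h : 0 < ∫ t in a..b, gaussianPDFReal 0 1 t :=
    intervalIntegral.intervalIntegral_pos_of_pos_on
      (integrable_gaussianPDFReal 0 1).intervalIntegrable
      (fun x _ => gaussianPDFReal_pos 0 1 x one_ne_zero) hab
  linarith [Phi_sub_Phi a b]

lemma Phi_add_Phi_neg (x : ℝ) : Phi x + Phi (-x) = 1 := by
  have hφ := integrable_gaussianPDFReal 0 1
  have h_neg : Phi (-x) = ∫ t in Ioi x, gaussianPDFReal 0 1 t := by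
    rw [Phi_eq_integral, ← neg_neg x, ← integral_comp_neg_Iic, neg_neg]
    simp [gaussianPDFReal]
  rw [Phi_eq_integral, h_neg, intervalIntegral.integral_Iic_add_Ioi hφ.integrableOn hφ.integrableOn]
  exact integral_gaussianPDFReal_eq_one 0 one_ne_zero

lemma Phi_pos (x : ℝ) : 0 < Phi x := by
  have h_nonneg : 0 ≤ Phi (x - 1) := ENNReal.toReal_nonneg
  linarith [Phi_strictMono (sub_one_lt x)]

lemma pos_of_Phi_neg_lt_half {z : ℝ} (h : Phi (-z) < 1 / 2) : 0 < z := by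
  have h₀ : Phi 0 = 1 / 2 := by
    have := Phi_add_Phi_neg 0
    rw [neg_zero] at this
    linarith
  rw [← h₀, Phi_strictMono.lt_iff_lt] at h
  linarith

lemma gaussianPDFReal_lt_of_sq_lt {x y : ℝ} (h : x ^ 2 < y ^ 2) :
    gaussianPDFReal 0 1 y < gaussianPDFReal 0 1 x := by
  simp only [gaussianPDFReal, sub_zero, NNReal.coe_one, mul_one]
  gcongr

/-- For `x ∈ (a, b)`, the point `x + c` is farther than `x` from the mode `0`. -/
lemma Phi_add_sub_Phi_add_lt {a b c : ℝ} (hab : a < b) (hc : 0 < c) (ha : 0 ≤ 2 * a + c) :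
    Phi (b + c) - Phi (a + c) < Phi b - Phi a := by
  have hφ := integrable_gaussianPDFReal 0 1
  have hφc := hφ.comp_add_right c
  rw [Phi_sub_Phi, Phi_sub_Phi, ← intervalIntegral.integral_comp_add_right, ← sub_pos,
    ← intervalIntegral.integral_sub hφ.intervalIntegrable hφc.intervalIntegrable]
  refine intervalIntegral.intervalIntegral_pos_of_pos_on
    (hφ.intervalIntegrable.sub hφc.intervalIntegrable) (fun x hx => ?_) hab
  have : x ^ 2 < (x + c) ^ 2 := by nlinarith [hx.1]
  exact sub_pos.mpr (gaussianPDFReal_lt_of_sq_lt this)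

lemma sigTilde_eq (lam σ θ : ℝ) : sigTilde lam σ θ = σ * θ ^ 2 / (θ ^ 2 + lam) := by
  unfold sigTilde
  split_ifs with h
  · simp [h]
  · field_simp

lemma mul_sq_div_sq_add_lt {k lam : ℝ} (hk : 0 < k) (hlam : 0 < lam) (θ : ℝ) :
    k * θ ^ 2 / (θ ^ 2 + lam) < k := by
  rw [div_lt_iff₀ (by positivity)]
  nlinarith

lemma strictMonoOn_mul_sq_div_sq_add {k lam : ℝ} (hk : 0 < k) (hlam : 0 < lam) :
    StrictMonoOn (fun θ => k * θ ^ 2 / (θ ^ 2 + lam)) (Ici 0) := by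
  intro θ₁ h₁ θ₂ _ h12
  have h₁ : 0 ≤ θ₁ := h₁
  rw [div_lt_div_iff₀ (by positivity) (by positivity)]
  nlinarith [mul_pos (mul_pos hk hlam) (show 0 < θ₂ ^ 2 - θ₁ ^ 2 by nlinarith)]

/-- The slope of `θ ↦ k θ² / (θ² + s²)` is at most `9k / (8√3 s)`, which is `< 1` when `k < s`. -/
lemma strictMonoOn_sub_mul_sq_div_sq_add_s14 {k s : ℝ} (hs : 0 < s) (hks : k < s) :
    StrictMonoOn (fun θ => θ - k * θ ^ 2 / (θ ^ 2 + s ^ 2)) (Ioi 0) := by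
  intro θ₁ h₁ θ₂ _ h12
  have h₁ : 0 < θ₁ := h₁
  have hslope : k * (s ^ 2 * (θ₁ + θ₂)) < (θ₁ ^ 2 + s ^ 2) * (θ₂ ^ 2 + s ^ 2) := by
    nlinarith [mul_lt_mul_of_pos_right hks (mul_pos (pow_pos hs 2) (by linarith : 0 < θ₁ + θ₂)),
      mul_nonneg (sq_nonneg s) (sq_nonneg (2 * θ₁ - s)),
      mul_nonneg (sq_nonneg s) (sq_nonneg (2 * θ₂ - s)), sq_nonneg (θ₁ * θ₂)]
  have d₁ : 0 < θ₁ ^ 2 + s ^ 2 := by positivity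
  have d₂ : 0 < θ₂ ^ 2 + s ^ 2 := by positivity
  have hgap : k * θ₂ ^ 2 / (θ₂ ^ 2 + s ^ 2) - k * θ₁ ^ 2 / (θ₁ ^ 2 + s ^ 2) < θ₂ - θ₁ := by
    rw [div_sub_div _ _ d₂.ne' d₁.ne', div_lt_iff₀ (by positivity)]
    nlinarith [mul_lt_mul_of_pos_left hslope (by linarith : 0 < θ₂ - θ₁)]
  dsimp only
  linarith

lemma Ps_pos (n : ℕ) (σ θ ν : ℝ) : 0 < Ps n σ θ ν :=
  add_pos (Phi_pos _) (Phi_pos _)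

lemma Ps_strictMonoOn {n : ℕ} {σ ν : ℝ} (hn : 0 < n) (hσ : 0 < σ) (hν : 0 < ν) :
    StrictMonoOn (fun θ => Ps n σ θ ν) (Ici 0) := by
  intro θ₁ h₁ θ₂ _ h12
  have h₁ : 0 ≤ θ₁ := h₁
  have ht : 0 < Real.sqrt n / σ := div_pos (Real.sqrt_pos.mpr (Nat.cast_pos.mpr hn)) hσ
  set t := Real.sqrt n / σ with ht_def
  have hPs (θ : ℝ) : Ps n σ θ ν = Phi (t * (θ - ν)) + (1 - Phi (t * (θ - ν) + 2 * t * ν)) := by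
    rw [Ps, ← Phi_add_Phi_neg (t * (θ - ν) + 2 * t * ν), add_sub_cancel_left, ht_def]
    congr 2 <;> ring
  have hshift := Phi_add_sub_Phi_add_lt (a := t * (θ₁ - ν)) (b := t * (θ₂ - ν)) (c := 2 * t * ν)
    (by gcongr) (by positivity) (by nlinarith)
  simp only [hPs]
  linarith

lemma Phi_sub_Phi_eq_Ps_sub (n : ℕ) (σ θ ν x : ℝ) :
    Phi x - Phi (Real.sqrt n * (ν - θ) / σ) =
      Ps n σ θ ν - (Phi (-x) + Phi (Real.sqrt n * (-θ - ν) / σ)) := by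
  have hx := Phi_add_Phi_neg x
  have hu := Phi_add_Phi_neg (Real.sqrt n * (θ - ν) / σ)
  rw [show -(Real.sqrt n * (θ - ν) / σ) = Real.sqrt n * (ν - θ) / σ by ring] at hu
  rw [Ps]
  linarith

lemma strictMonoOn_sub_div_self {f g : ℝ → ℝ} {s : Set ℝ} (hf : AntitoneOn f s)
    (hg : StrictMonoOn g s) (hf₀ : ∀ x ∈ s, 0 < f x) (hg₀ : ∀ x ∈ s, 0 < g x) :
    StrictMonoOn (fun x => (g x - f x) / g x) s := by
  intro x hx y hy hxy
  have hdiv : f y / g y < f x / g x :=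
    div_lt_div₀' (hf hx hy hxy.le) (hg hx hy hxy) (hf₀ x hx) (hg₀ x hx)
  simp only [sub_div, div_self (hg₀ x hx).ne', div_self (hg₀ y hy).ne']
  linarith

noncomputable def halfWidth (n : ℕ) (σ lam za θ : ℝ) : ℝ := za * sigTilde lam σ θ / Real.sqrt n

lemma CRa_eq_zero_of_lt_abs {n : ℕ} {σ lam za θ ν : ℝ}
    (h₁ : θ < |ν - halfWidth n σ lam za θ|) (h₂ : halfWidth n σ lam za θ ≤ ν) :
    CRa n σ lam za θ ν = 0 := by
  unfold halfWidth at h₁ h₂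
  rw [CRa, if_pos h₁, if_neg (not_lt.mpr h₂), mul_zero]

lemma CRa_eq_of_abs_le {n : ℕ} {σ lam za θ ν : ℝ}
    (h₁ : |ν - halfWidth n σ lam za θ| ≤ θ) (h₂ : θ ≤ ν + halfWidth n σ lam za θ) :
    CRa n σ lam za θ ν = Phi (za * sigTilde lam σ θ / σ) - Phi (Real.sqrt n * (ν - θ) / σ) := by
  unfold halfWidth at h₁ h₂
  rw [CRa, if_neg (not_lt.mpr h₁), if_pos h₂]

section HalfWidth

variable {n : ℕ} {σ lam za : ℝ}

lemma halfWidth_eq (θ : ℝ) :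
    halfWidth n σ lam za θ = za * σ / Real.sqrt n * θ ^ 2 / (θ ^ 2 + lam) := by
  rw [halfWidth, sigTilde_eq]
  ring

lemma halfWidth_pos (hk₀ : 0 < za * σ / Real.sqrt n) (hlam : 0 < lam) {θ : ℝ} (hθ : θ ≠ 0) :
    0 < halfWidth n σ lam za θ := by
  rw [halfWidth_eq]
  positivity

lemma halfWidth_lt_sqrt (hk₀ : 0 < za * σ / Real.sqrt n) (hlam : 0 < lam)
    (hk : za * σ / Real.sqrt n < Real.sqrt lam) (θ : ℝ) :
    halfWidth n σ lam za θ < Real.sqrt lam := by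
  rw [halfWidth_eq]
  exact (mul_sq_div_sq_add_lt hk₀ hlam θ).trans hk

lemma halfWidth_strictMonoOn (hk₀ : 0 < za * σ / Real.sqrt n) (hlam : 0 < lam) :
    StrictMonoOn (halfWidth n σ lam za) (Ici 0) := by
  simpa only [funext halfWidth_eq] using strictMonoOn_mul_sq_div_sq_add hk₀ hlam

lemma strictMonoOn_sub_halfWidth (hlam : 0 < lam) (hk : za * σ / Real.sqrt n < Real.sqrt lam) :
    StrictMonoOn (fun θ => θ - halfWidth n σ lam za θ) (Ioi 0) := by
  simpa only [halfWidth_eq, Real.sq_sqrt hlam.le] using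
    strictMonoOn_sub_mul_sq_div_sq_add_s14 (Real.sqrt_pos.mpr hlam) hk

end HalfWidth

section Roots

variable {n : ℕ} {σ lam za c₁ c₂ : ℝ}

lemma CRa_eq_zero_of_mem_Ioc (hn : 0 < n) (hk₀ : 0 < za * σ / Real.sqrt n) (hlam : 0 < lam)
    (hc₁ : c₁ = Real.sqrt lam - halfWidth n σ lam za c₁) {θ : ℝ} (hθ : θ ∈ Ioc 0 c₁) :
    CRa n σ lam za θ (Real.sqrt lam) = 0 := by
  obtain ⟨hθ₀, hθc | rfl⟩ := And.imp_right le_iff_lt_or_eq.mp hθ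
  · have hw := halfWidth_strictMonoOn hk₀ hlam hθ₀.le (hθ₀.trans hθc).le hθc
    have hwθ := halfWidth_pos hk₀ hlam hθ₀.ne'
    exact CRa_eq_zero_of_lt_abs ((by linarith : θ < _).trans_le (le_abs_self _)) (by linarith)
  · have hw := halfWidth_pos hk₀ hlam hθ₀.ne'
    have hroot : Real.sqrt n * (Real.sqrt lam - θ) / σ = za * sigTilde lam σ θ / σ := by
      rw [show Real.sqrt lam - θ = halfWidth n σ lam za θ by linarith, halfWidth,
        mul_div_cancel₀ _ (Real.sqrt_pos.mpr (Nat.cast_pos.mpr hn)).ne']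
    rw [CRa_eq_of_abs_le (by rw [← hc₁, abs_of_pos hθ₀]) (by linarith), hroot, sub_self]

lemma CRa_eq_of_mem_Icc (hk₀ : 0 < za * σ / Real.sqrt n) (hlam : 0 < lam)
    (hk : za * σ / Real.sqrt n < Real.sqrt lam) (hc₁pos : 0 < c₁)
    (hc₁ : c₁ = Real.sqrt lam - halfWidth n σ lam za c₁)
    (hc₂ : c₂ = Real.sqrt lam + halfWidth n σ lam za c₂) {θ : ℝ} (hθ : θ ∈ Icc c₁ c₂) :
    CRa n σ lam za θ (Real.sqrt lam) =
      Phi (za * sigTilde lam σ θ / σ) - Phi (Real.sqrt n * (Real.sqrt lam - θ) / σ) := by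
  obtain ⟨hθ₁, hθ₂⟩ := hθ
  have hθ₀ : 0 < θ := hc₁pos.trans_le hθ₁
  have hw₁ := (halfWidth_strictMonoOn hk₀ hlam).monotoneOn hc₁pos.le hθ₀.le hθ₁
  have hw₂ := (strictMonoOn_sub_halfWidth hlam hk).monotoneOn hθ₀ (hθ₀.trans_le hθ₂) hθ₂
  have hwθ := halfWidth_lt_sqrt hk₀ hlam hk θ
  refine CRa_eq_of_abs_le (abs_le.mpr ⟨?_, ?_⟩) ?_ <;> linarith

end Roots

lemma antitoneOn_Phi_tail (n : ℕ) (ν : ℝ) {σ lam za : ℝ} (hσ : 0 < σ) (hlam : 0 < lam)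
    (hza : 0 < za) :
    AntitoneOn (fun θ => Phi (-(za * sigTilde lam σ θ / σ)) + Phi (Real.sqrt n * (-θ - ν) / σ))
      (Ici 0) := by
  have hprofile (θ : ℝ) : za * sigTilde lam σ θ / σ = za * θ ^ 2 / (θ ^ 2 + lam) := by
    rw [sigTilde_eq]
    field_simp
  intro θ₁ h₁ θ₂ h₂ h12
  simp only [hprofile]
  exact add_le_add
    (Phi_strictMono.monotone (neg_le_neg
      ((strictMonoOn_mul_sq_div_sq_add hza hlam).monotoneOn h₁ h₂ h12)))
    (Phi_strictMono.monotone (by gcongr))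

theorem CR1_monotone_general (n : ℕ) (hn : 1 ≤ n) (σ lam α za : ℝ)
    (hσ : 0 < σ) (hlam : 0 < lam)
    (hα : α ∈ Set.Ioo (0:ℝ) 1)
    (hza : Phi (-za) = α / 2)
    (hlamLB : za * σ / Real.sqrt n < Real.sqrt lam)
    (c₁ c₂ : ℝ) (hc₁pos : 0 < c₁)
    (hc₁ : c₁ = Real.sqrt lam - za * sigTilde lam σ c₁ / Real.sqrt n)
    (hc₂ : c₂ = Real.sqrt lam + za * sigTilde lam σ c₂ / Real.sqrt n) :
    MonotoneOn (fun θ : ℝ => CRa n σ lam za θ (Real.sqrt lam)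
        / Ps n σ θ (Real.sqrt lam)) (Set.Ioc 0 c₁) ∧
    StrictMonoOn (fun θ : ℝ => CRa n σ lam za θ (Real.sqrt lam)
        / Ps n σ θ (Real.sqrt lam)) (Set.Icc c₁ c₂) := by
  have hza₀ : 0 < za := pos_of_Phi_neg_lt_half (by rw [hza]; linarith [hα.2])
  have hk₀ : 0 < za * σ / Real.sqrt n := by
    have : 0 < Real.sqrt n := Real.sqrt_pos.mpr (Nat.cast_pos.mpr hn)
    positivity
  refine ⟨fun a ha b hb _ => ?_, ?_⟩
  · simp only [CRa_eq_zero_of_mem_Ioc hn hk₀ hlam hc₁ ha,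
      CRa_eq_zero_of_mem_Ioc hn hk₀ hlam hc₁ hb, zero_div, le_refl]
  have hpos : Icc c₁ c₂ ⊆ Ici 0 := fun θ hθ => (hc₁pos.trans_le hθ.1).le
  refine (strictMonoOn_sub_div_self ((antitoneOn_Phi_tail n (Real.sqrt lam) hσ hlam hza₀).mono hpos)
    ((Ps_strictMonoOn hn hσ (Real.sqrt_pos.mpr hlam)).mono hpos)
    (fun θ _ => add_pos (Phi_pos _) (Phi_pos _)) (fun θ _ => Ps_pos n σ θ _)).congr
    fun θ hθ => ?_
  dsimp only
  rw [CRa_eq_of_mem_Icc hk₀ hlam hlamLB hc₁pos hc₁ hc₂ hθ, Phi_sub_Phi_eq_Ps_sub]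

/-- Monotonicity of CR₁: θ ↦ CR_a(θ, √λ)/P_s(θ, √λ) is
non-decreasing on (0, c₁] and strictly increasing on [c₁, c₂]. -/
theorem CR1_monotone (n : ℕ) (hn : 1 ≤ n) (σ lam α τ za zt : ℝ)
    (hσ : 0 < σ) (hlam : 0 < lam)
    (hα : α ∈ Set.Ioo (0:ℝ) 1) (hτ : τ ∈ Set.Ioo (0:ℝ) 1)
    (hza : Phi (-za) = α / 2) (hzt : Phi (-zt) = τ / 2)
    (hC1 : α ≤ τ) (hC2 : τ < 2 * Phi (-(za / 2)) - α)
    (hlamLB : za * σ / Real.sqrt n < Real.sqrt lam)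
    (c₁ c₂ : ℝ) (hc₁pos : 0 < c₁) (hc₂pos : 0 < c₂)
    (hc₁ : c₁ = Real.sqrt lam - za * sigTilde lam σ c₁ / Real.sqrt n)
    (hc₂ : c₂ = Real.sqrt lam + za * sigTilde lam σ c₂ / Real.sqrt n) :
    MonotoneOn (fun θ : ℝ => CRa n σ lam za θ (Real.sqrt lam)
        / Ps n σ θ (Real.sqrt lam)) (Set.Ioc 0 c₁) ∧
    StrictMonoOn (fun θ : ℝ => CRa n σ lam za θ (Real.sqrt lam)
        / Ps n σ θ (Real.sqrt lam)) (Set.Icc c₁ c₂) :=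
  CR1_monotone_general n hn σ lam α za hσ hlam hα hza hlamLB c₁ c₂ hc₁pos hc₁ hc₂
end
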